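/- arXiv:1806.09683 — 7 statements merged into one kernel-verified Lean document; each statement's English description precedes it below -/
import Mathlib

section
/- If G is a graph and v is a vertex of degree 2 with neighbors u and w, then the maximum matching size of G equals the maximum matching size of the graph G' obtained by deleting v and merging u and w into a single vertex, plus one. -/
/-- A matching in a simple graph `G`, given as a finite set of edges of `G`
that are pairwise vertex-disjoint. -/
def IsMatching {V : Type*} (G : SimpleGraph V) (M : Finset (Sym2 V)) : Prop :=
  (∀ e ∈ M, e ∈ G.edgeSet) ∧
    ∀ e ∈ M, ∀ f ∈ M, e ≠ f → ∀ v, v ∈ e → v ∉ f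

/-- The maximum cardinality of a matching in `G`. -/
noncomputable def mm {V : Type*} (G : SimpleGraph V) : ℕ :=
  sSup {n | ∃ M : Finset (Sym2 V), IsMatching G M ∧ M.card = n}

/-- The graph obtained from `G` by deleting the degree-two vertex `v` and merging
its two neighbors `u` and `w` into a single vertex (represented by `u`):
the merged vertex is adjacent to every vertex other than `u, w, v` that was
adjacent to `u` or to `w`; `v` and `w` become isolated. -/
def mergeNeighbors {V : Type*} (G : SimpleGraph V) (v u w : V) : SimpleGraph V where
  Adj a b := a ≠ b ∧ a ≠ v ∧ b ≠ v ∧ a ≠ w ∧ b ≠ w ∧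
    ((a = u ∧ (G.Adj u b ∨ G.Adj w b)) ∨ (b = u ∧ (G.Adj a u ∨ G.Adj a w)) ∨
      (a ≠ u ∧ b ≠ u ∧ G.Adj a b))
  symm := by
    constructor
    rintro a b ⟨h1, h2, h3, h4, h5, h6⟩
    refine ⟨h1.symm, h3, h2, h5, h4, ?_⟩
    rcases h6 with ⟨rfl, h⟩ | ⟨rfl, h⟩ | ⟨ha, hb, h⟩
    · exact Or.inr (Or.inl ⟨rfl, by rcases h with h | h; exacts [Or.inl h.symm, Or.inr h.symm]⟩)
    · exact Or.inl ⟨rfl, by rcases h with h | h; exacts [Or.inl h.symm, Or.inr h.symm]⟩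
    · exact Or.inr (Or.inr ⟨hb, ha, h.symm⟩)
  loopless := by constructor; rintro a ⟨h1, -⟩; exact h1 rfl

/-! Let `σ` exchange `u` and `w`. An edge of the merged graph is an edge `e` avoiding `v` and `w`
such that `e` or `σ e` is an edge of `G`. So a matching of the merged graph, moved by `σ` when
its edge at `u` only comes from an edge of `G` at `w`, is a matching of `G` that leaves `v` and
one neighbour of `v` uncovered, and the edge between them can be added. Conversely, a matching
of `G` has at most one edge at `v`, ending at some `x ∈ {u, w}`; dropping the edge at `x` and
exchanging `x` with `w` leaves a matching of the merged graph. -/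

theorem Sym2.mem_map_equiv {α β : Type*} (σ : α ≃ β) {e : Sym2 α} {y : β} :
    y ∈ e.map σ ↔ σ.symm y ∈ e := by
  rw [Sym2.mem_map]
  constructor
  · rintro ⟨a, ha, rfl⟩
    simpa using ha
  · exact fun h => ⟨_, h, σ.apply_symm_apply y⟩

section Matching

variable {V W : Type*} {G : SimpleGraph V} {M : Finset (Sym2 V)}

theorem IsMatching.eq_of_mem {e f : Sym2 V} {x : V} (hM : IsMatching G M) (he : e ∈ M)
    (hf : f ∈ M) (hxe : x ∈ e) (hxf : x ∈ f) : e = f := by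
  by_contra hef
  exact hM.2 e he f hf hef x hxe hxf

theorem IsMatching.subset {N : Finset (Sym2 V)} (hM : IsMatching G M) (hNM : N ⊆ M) :
    IsMatching G N :=
  ⟨fun e he => hM.1 e (hNM he), fun e he f hf => hM.2 e (hNM he) f (hNM hf)⟩

theorem IsMatching.insert [DecidableEq V] {a b : V} (hM : IsMatching G M) (hab : G.Adj a b)
    (ha : ∀ e ∈ M, a ∉ e) (hb : ∀ e ∈ M, b ∉ e) : IsMatching G (insert s(a, b) M) := by
  have hfree : ∀ e ∈ M, ∀ x ∈ s(a, b), x ∉ e := by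
    intro e he x hx
    rcases Sym2.mem_iff.1 hx with rfl | rfl
    exacts [ha e he, hb e he]
  refine ⟨?_, ?_⟩
  · simp only [Finset.mem_insert, forall_eq_or_imp]
    exact ⟨hab, hM.1⟩
  · intro e he f hf hef x hxe hxf
    rcases Finset.mem_insert.1 he with rfl | he <;> rcases Finset.mem_insert.1 hf with rfl | hf
    exacts [hef rfl, hfree f hf x hxe hxf, hfree e he x hxf hxe, hM.2 e he f hf hef x hxe hxf]

theorem card_insert_mk_of_forall_notMem [DecidableEq V] {a b : V} (ha : ∀ e ∈ M, a ∉ e) :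
    (insert s(a, b) M).card = M.card + 1 :=
  Finset.card_insert_of_notMem fun h => ha _ h (Sym2.mem_mk_left a b)

theorem IsMatching.image [DecidableEq W] {H : SimpleGraph W} {f : V → W}
    (hf : Function.Injective f) (hM : IsMatching G M)
    (hMH : ∀ e ∈ M, e.map f ∈ H.edgeSet) : IsMatching H (M.image (Sym2.map f)) := by
  refine ⟨by simpa using hMH, ?_⟩
  simp only [Finset.mem_image]
  rintro _ ⟨e, he, rfl⟩ _ ⟨e', he', rfl⟩ hne y hy hy'
  obtain ⟨a, ha, rfl⟩ := Sym2.mem_map.1 hy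
  obtain ⟨a', ha', hfa⟩ := Sym2.mem_map.1 hy'
  rw [hf hfa] at ha'
  exact hM.2 e he e' he' (fun h => hne (h ▸ rfl)) a ha ha'

theorem IsMatching.card_le_card_filter_notMem_add_one [DecidableEq V] (hM : IsMatching G M) (x : V) :
    M.card ≤ (M.filter (x ∉ ·)).card + 1 := by
  have hx : (M.filter (x ∈ ·)).card ≤ 1 :=
    Finset.card_le_one.2 fun e he f hf =>
      hM.eq_of_mem (Finset.mem_filter.1 he).1 (Finset.mem_filter.1 hf).1
        (Finset.mem_filter.1 he).2 (Finset.mem_filter.1 hf).2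
  have := Finset.card_filter_add_card_filter_not (s := M) (p := (x ∈ ·))
  omega

end Matching

section MaximumMatching

variable {V : Type*} [Fintype V] {G : SimpleGraph V}

theorem bddAbove_card_isMatching (G : SimpleGraph V) :
    BddAbove {n | ∃ M : Finset (Sym2 V), IsMatching G M ∧ M.card = n} := by
  classical
  refine ⟨Fintype.card (Sym2 V), ?_⟩
  rintro n ⟨M, -, rfl⟩
  exact Finset.card_le_univ M

theorem IsMatching.card_le_mm {M : Finset (Sym2 V)} (hM : IsMatching G M) : M.card ≤ mm G :=
  le_csSup (bddAbove_card_isMatching G) ⟨M, hM, rfl⟩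

theorem exists_isMatching_card_eq_mm (G : SimpleGraph V) :
    ∃ M : Finset (Sym2 V), IsMatching G M ∧ M.card = mm G :=
  Nat.sSup_mem (s := {n | ∃ M : Finset (Sym2 V), IsMatching G M ∧ M.card = n})
    ⟨0, ∅, ⟨by simp, by simp⟩, rfl⟩ (bddAbove_card_isMatching G)

end MaximumMatching

theorem Sym2.map_swap_eq_self {α : Type*} [DecidableEq α] {a b : α} {e : Sym2 α} (ha : a ∉ e)
    (hb : b ∉ e) : e.map (Equiv.swap a b) = e := by
  rw [Sym2.map_congr fun x hx => Equiv.swap_apply_of_ne_of_ne (ne_of_mem_of_not_mem hx ha)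
    (ne_of_mem_of_not_mem hx hb), Sym2.map_id', id]

section MergeNeighbors

variable {V : Type*} {G : SimpleGraph V} {v u w : V}

theorem mergeNeighbors_adj_iff [DecidableEq V] {a b : V} :
    (mergeNeighbors G v u w).Adj a b ↔ a ≠ v ∧ b ≠ v ∧ a ≠ w ∧ b ≠ w ∧
      (G.Adj a b ∨ G.Adj (Equiv.swap u w a) (Equiv.swap u w b)) := by
  have fix : ∀ {x}, x ≠ u → x ≠ w → Equiv.swap u w x = x := Equiv.swap_apply_of_ne_of_ne
  change (a ≠ b ∧ a ≠ v ∧ b ≠ v ∧ a ≠ w ∧ b ≠ w ∧ _) ↔ _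
  constructor
  · rintro ⟨hab, hav, hbv, haw, hbw, ⟨rfl, h⟩ | ⟨rfl, h⟩ | ⟨hau, hbu, h⟩⟩
    · rw [Equiv.swap_apply_left, fix hab.symm hbw]
      exact ⟨hav, hbv, haw, hbw, h⟩
    · rw [Equiv.swap_apply_left, fix hab haw]
      exact ⟨hav, hbv, haw, hbw, h⟩
    · exact ⟨hav, hbv, haw, hbw, Or.inl h⟩
  rintro ⟨hav, hbv, haw, hbw, h⟩
  have hab : a ≠ b := by
    rintro rfl
    exact h.elim (G.loopless.irrefl _) (G.loopless.irrefl _)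
  refine ⟨hab, hav, hbv, haw, hbw, ?_⟩
  by_cases hau : a = u
  · subst hau
    rw [Equiv.swap_apply_left, fix hab.symm hbw] at h
    exact Or.inl ⟨rfl, h⟩
  by_cases hbu : b = u
  · subst hbu
    rw [Equiv.swap_apply_left, fix hab haw] at h
    exact Or.inr (Or.inl ⟨rfl, h⟩)
  rw [fix hau haw, fix hbu hbw, or_self] at h
  exact Or.inr (Or.inr ⟨hau, hbu, h⟩)

theorem mem_edgeSet_mergeNeighbors [DecidableEq V] {e : Sym2 V} :
    e ∈ (mergeNeighbors G v u w).edgeSet ↔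
      v ∉ e ∧ w ∉ e ∧ (e ∈ G.edgeSet ∨ e.map (Equiv.swap u w) ∈ G.edgeSet) := by
  induction e using Sym2.ind with
  | _ a b =>
    simp only [SimpleGraph.mem_edgeSet, mergeNeighbors_adj_iff, Sym2.map_mk, Sym2.mem_iff,
      not_or]
    grind

theorem mem_edgeSet_of_mem_edgeSet_mergeNeighbors [DecidableEq V] {e : Sym2 V}
    (he : e ∈ (mergeNeighbors G v u w).edgeSet) (hue : u ∉ e) : e ∈ G.edgeSet := by
  obtain ⟨-, hwe, h⟩ := mem_edgeSet_mergeNeighbors.1 he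
  rwa [Sym2.map_swap_eq_self hue hwe, or_self] at h

theorem IsMatching.exists_card_eq_add_one_of_mergeNeighbors [DecidableEq V] (hvu : G.Adj v u)
    (hvw : G.Adj v w) {M : Finset (Sym2 V)} (hM : IsMatching (mergeNeighbors G v u w) M) :
    ∃ N : Finset (Sym2 V), IsMatching G N ∧ N.card = M.card + 1 := by
  have hM' := fun e he => mem_edgeSet_mergeNeighbors.1 (hM.1 e he)
  by_cases hG : ∀ e ∈ M, e ∈ G.edgeSet
  · have hv : ∀ e ∈ M, v ∉ e := fun e he => (hM' e he).1
    exact ⟨_, IsMatching.insert ⟨hG, hM.2⟩ hvw hv fun e he => (hM' e he).2.1,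
      card_insert_mk_of_forall_notMem hv⟩
  push Not at hG
  obtain ⟨e₀, he₀, he₀G⟩ := hG
  have hu₀ : u ∈ e₀ := by
    by_contra hu
    exact he₀G (mem_edgeSet_of_mem_edgeSet_mergeNeighbors (hM.1 e₀ he₀) hu)
  have hσM : ∀ e ∈ M, e.map (Equiv.swap u w) ∈ G.edgeSet := by
    intro e he
    by_cases hue : u ∈ e
    · rw [hM.eq_of_mem he he₀ hue hu₀]
      exact (hM' e₀ he₀).2.2.resolve_left he₀G
    · rw [Sym2.map_swap_eq_self hue (hM' e he).2.1]
      exact mem_edgeSet_of_mem_edgeSet_mergeNeighbors (hM.1 e he) hue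
  have hfree : ∀ e ∈ M.image (Sym2.map (Equiv.swap u w)), v ∉ e ∧ u ∉ e := by
    simp only [Finset.mem_image]
    rintro _ ⟨e, he, rfl⟩
    rw [Sym2.mem_map_equiv, Sym2.mem_map_equiv, Equiv.symm_swap, Equiv.swap_apply_left,
      Equiv.swap_apply_of_ne_of_ne hvu.ne hvw.ne]
    exact ⟨(hM' e he).1, (hM' e he).2.1⟩
  refine ⟨_, (hM.image (Equiv.injective _) hσM).insert hvu (fun e he => (hfree e he).1)
    (fun e he => (hfree e he).2), ?_⟩
  rw [card_insert_mk_of_forall_notMem fun e he => (hfree e he).1,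
    Finset.card_image_of_injective _ (Sym2.map.injective (Equiv.injective _))]

theorem IsMatching.exists_forall_mem_of_neighborSet_subset {M : Finset (Sym2 V)}
    (hM : IsMatching G M) (hv : G.neighborSet v ⊆ {u, w}) :
    ∃ x, (x = u ∨ x = w) ∧ ∀ e ∈ M, v ∈ e → x ∈ e := by
  by_cases hcov : ∃ e ∈ M, v ∈ e
  · obtain ⟨e, he, hve⟩ := hcov
    obtain ⟨x, rfl⟩ := Sym2.mem_iff_exists.1 hve
    refine ⟨x, hv (hM.1 _ he), fun e' he' hve' => ?_⟩
    rw [hM.eq_of_mem he' he hve' hve]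
    exact Sym2.mem_mk_right v x
  · push Not at hcov
    exact ⟨u, Or.inl rfl, fun e he hve => absurd hve (hcov e he)⟩

theorem IsMatching.exists_mergeNeighbors_card_add_one_ge [DecidableEq V] (hvu : v ≠ u)
    (hvw : v ≠ w) (hv : G.neighborSet v ⊆ {u, w}) {M : Finset (Sym2 V)} (hM : IsMatching G M) :
    ∃ N : Finset (Sym2 V), IsMatching (mergeNeighbors G v u w) N ∧ M.card ≤ N.card + 1 := by
  obtain ⟨x, hx, hvx⟩ := hM.exists_forall_mem_of_neighborSet_subset hv
  have hxv : v ≠ x := by rcases hx with rfl | rfl <;> assumption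
  -- Dropping the edge at `x` frees `v` as well; exchanging `x` with `w` (the identity if `x = w`)
  -- then frees `w`.
  set M₀ := M.filter (x ∉ ·)
  have hM₀ : ∀ e ∈ M₀, x ∉ e ∧ v ∉ e := by
    intro e he
    have hxe := (Finset.mem_filter.1 he).2
    exact ⟨hxe, fun hve => hxe (hvx e (Finset.mem_filter.1 he).1 hve)⟩
  refine ⟨M₀.image (Sym2.map (Equiv.swap x w)), (hM.subset (Finset.filter_subset _ _)).image
    (Equiv.injective _) fun e he => mem_edgeSet_mergeNeighbors.2 ⟨?_, ?_, ?_⟩, ?_⟩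
  · rw [Sym2.mem_map_equiv, Equiv.symm_swap, Equiv.swap_apply_of_ne_of_ne hxv hvw]
    exact (hM₀ e he).2
  · rw [Sym2.mem_map_equiv, Equiv.symm_swap, Equiv.swap_apply_right]
    exact (hM₀ e he).1
  · have heG := hM.1 e (Finset.mem_filter.1 he).1
    rcases hx with rfl | rfl
    · right
      rwa [Sym2.map_map, ← Equiv.coe_trans, Equiv.swap_swap, Equiv.coe_refl, Sym2.map_id, id]
    · left
      rwa [Equiv.swap_self, Equiv.coe_refl, Sym2.map_id, id]
  · rw [Finset.card_image_of_injective _ (Sym2.map.injective (Equiv.injective _))]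
    exact hM.card_le_card_filter_notMem_add_one x

end MergeNeighbors

section MaximumMatchingMerge

variable {V : Type*} [Fintype V] {G : SimpleGraph V} {v u w : V}

theorem mm_mergeNeighbors_add_one_le (hvu : G.Adj v u) (hvw : G.Adj v w) :
    mm (mergeNeighbors G v u w) + 1 ≤ mm G := by
  classical
  obtain ⟨M, hM, hcard⟩ := exists_isMatching_card_eq_mm (mergeNeighbors G v u w)
  obtain ⟨N, hN, hNcard⟩ := hM.exists_card_eq_add_one_of_mergeNeighbors hvu hvw
  rw [← hcard, ← hNcard]
  exact hN.card_le_mm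

theorem mm_le_mm_mergeNeighbors_add_one (hvu : v ≠ u) (hvw : v ≠ w)
    (hv : G.neighborSet v ⊆ {u, w}) : mm G ≤ mm (mergeNeighbors G v u w) + 1 := by
  classical
  obtain ⟨M, hM, hcard⟩ := exists_isMatching_card_eq_mm G
  obtain ⟨N, hN, hle⟩ := hM.exists_mergeNeighbors_card_add_one_ge hvu hvw hv
  rw [← hcard]
  exact hle.trans (Nat.add_le_add_right hN.card_le_mm 1)

end MaximumMatchingMerge

theorem stmt1_general {V : Type*} [Fintype V] (G : SimpleGraph V)
    (v u w : V) (hnbrs : G.neighborSet v = {u, w}) :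
    mm G = mm (mergeNeighbors G v u w) + 1 := by
  have hvu : G.Adj v u := by simp [← SimpleGraph.mem_neighborSet, hnbrs]
  have hvw : G.Adj v w := by simp [← SimpleGraph.mem_neighborSet, hnbrs]
  exact le_antisymm (mm_le_mm_mergeNeighbors_add_one hvu.ne hvw.ne hnbrs.subset)
    (mm_mergeNeighbors_add_one_le hvu hvw)

/-- If `v` is a vertex of degree 2 with neighbors `u` and `w`, then the maximum
matching size of `G` equals the maximum matching size of the graph obtained by
deleting `v` and merging `u` and `w`, plus one. -/
theorem stmt1 {V : Type*} [Fintype V] [DecidableEq V] (G : SimpleGraph V)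
    (v u w : V) (huw : u ≠ w) (hnbrs : G.neighborSet v = {u, w}) :
    mm G = mm (mergeNeighbors G v u w) + 1 :=
  stmt1_general G v u w hnbrs
end

section
/- Given a crown (H, I) in a graph G and any maximum matching M' of G - (H ∪ I), the union M' ∪ M_{H,I} is a maximum matching of G, where M_{H,I} is a matching between H and I saturating H. -/
/-- A maximum(-cardinality) matching in `G`. -/
def IsMaxMatching {V : Type*} (G : SimpleGraph V) (M : Finset (Sym2 V)) : Prop :=
  IsMatching G M ∧ ∀ M' : Finset (Sym2 V), IsMatching G M' → M'.card ≤ M.card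

/-- The graph obtained from `G` by deleting the vertices in `S`
(the deleted vertices become isolated, which does not affect matchings). -/
def deleteVerts {V : Type*} (G : SimpleGraph V) (S : Set V) : SimpleGraph V where
  Adj a b := G.Adj a b ∧ a ∉ S ∧ b ∉ S
  symm := ⟨fun _ _ ⟨h, ha, hb⟩ => ⟨h.symm, hb, ha⟩⟩
  loopless := ⟨fun a ⟨h, _, _⟩ => G.loopless.irrefl a h⟩

open Finset

namespace SimpleGraph

variable {V : Type*}

lemma mem_edgeSet_deleteVerts {G : SimpleGraph V} {S : Set V} {e : Sym2 V} :
    e ∈ (deleteVerts G S).edgeSet ↔ e ∈ G.edgeSet ∧ ∀ v ∈ e, v ∉ S := by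
  induction e using Sym2.ind with
  | _ x y => simp [deleteVerts]

lemma deleteVerts_le (G : SimpleGraph V) (S : Set V) : deleteVerts G S ≤ G :=
  fun _ _ h => h.1

end SimpleGraph

open SimpleGraph

section Matching

variable {V : Type*} {G G' : SimpleGraph V} {M M₁ M₂ : Finset (Sym2 V)}

lemma IsMatching.mono (hM : IsMatching G M) (hle : G ≤ G') : IsMatching G' M :=
  ⟨fun e he => edgeSet_mono hle (hM.1 e he), hM.2⟩

lemma IsMatching.subset_s3 (hM : IsMatching G M) (hsub : M₁ ⊆ M) : IsMatching G M₁ :=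
  ⟨fun e he => hM.1 e (hsub he), fun e he f hf => hM.2 e (hsub he) f (hsub hf)⟩

lemma disjoint_of_forall_mem_not_mem (hsep : ∀ e ∈ M₁, ∀ f ∈ M₂, ∀ v ∈ e, v ∉ f) :
    Disjoint M₁ M₂ := by
  refine disjoint_left.2 fun e he₁ he₂ => ?_
  induction e using Sym2.ind with
  | _ x y => exact hsep _ he₁ _ he₂ x (Sym2.mem_mk_left x y) (Sym2.mem_mk_left x y)

lemma card_le_card_of_saturates {S : Finset V} (hsat : ∀ a ∈ S, ∃ e ∈ M, a ∈ e)
    (hone : ∀ e ∈ M, ∀ a ∈ S, ∀ b ∈ S, a ∈ e → b ∈ e → a = b) : #S ≤ #M :=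
  card_le_card_of_forall_subsingleton (fun a e => a ∈ e) hsat
    fun e he _ ha _ hb => hone e he _ ha.1 _ hb.1 ha.2 hb.2

variable [DecidableEq V]

lemma IsMatching.union (h₁ : IsMatching G M₁) (h₂ : IsMatching G M₂)
    (hsep : ∀ e ∈ M₁, ∀ f ∈ M₂, ∀ v ∈ e, v ∉ f) :
    IsMatching G (M₁ ∪ M₂) := by
  refine ⟨fun e he => (mem_union.1 he).elim (h₁.1 e) (h₂.1 e), ?_⟩
  intro e he f hf hef v hve hvf
  rcases mem_union.1 he with he | he <;> rcases mem_union.1 hf with hf | hf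
  · exact h₁.2 e he f hf hef v hve hvf
  · exact hsep e he f hf v hve hvf
  · exact hsep f hf e he v hvf hve
  · exact h₂.2 e he f hf hef v hve hvf

lemma IsMatching.card_filter_meets_le (hM : IsMatching G M) (S : Finset V) :
    #{e ∈ M | ∃ a ∈ S, a ∈ e} ≤ #S := by
  refine card_le_card_of_forall_subsingleton (fun e a => a ∈ e)
    (fun e he => by simpa using (mem_filter.1 he).2) fun a _ e he f hf => ?_
  by_contra hef
  exact hM.2 e (mem_filter.1 he.1).1 f (mem_filter.1 hf.1).1 hef a he.2 hf.2

lemma IsMatching.filter_not_meets_of_neighbors_subset (hM : IsMatching G M) {H I : Finset V}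
    (hNI : ∀ a ∈ I, ∀ b, G.Adj a b → b ∈ H) :
    IsMatching (deleteVerts G (↑H ∪ ↑I)) {e ∈ M | ¬ ∃ a ∈ H, a ∈ e} := by
  refine ⟨fun e he => ?_, (hM.subset_s3 (filter_subset _ M)).2⟩
  obtain ⟨heM, hnH⟩ := mem_filter.1 he
  push Not at hnH
  have hG := hM.1 e heM
  induction e using Sym2.ind with
  | _ x y =>
    have hx : x ∉ H := fun h => hnH x h (Sym2.mem_mk_left x y)
    have hy : y ∉ H := fun h => hnH y h (Sym2.mem_mk_right x y)
    have hxI : x ∉ I := fun h => hy (hNI x h y hG)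
    have hyI : y ∉ I := fun h => hx (hNI y h x (G.adj_symm hG))
    exact ⟨hG, by simp [hx, hxI], by simp [hy, hyI]⟩

end Matching

theorem stmt3_general {V : Type*} [DecidableEq V] (G : SimpleGraph V)
    (H I : Finset V)
    (hind : ∀ a ∈ I, ∀ b ∈ I, ¬ G.Adj a b)
    (hN : ∀ b, b ∈ H ↔ ∃ a ∈ I, G.Adj a b)
    (MHI : Finset (Sym2 V)) (hMHI : IsMatching G MHI)
    (hMbtw : ∀ e ∈ MHI, ∃ a ∈ H, ∃ b ∈ I, e = s(a, b))
    (hMsat : ∀ a ∈ H, ∃ e ∈ MHI, a ∈ e)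
    (M' : Finset (Sym2 V)) (hM' : IsMaxMatching (deleteVerts G (↑H ∪ ↑I)) M') :
    IsMaxMatching G (M' ∪ MHI) := by
  have hHI : ∀ x ∈ H, x ∉ I := fun x hxH hxI => by
    obtain ⟨a, haI, hax⟩ := (hN x).1 hxH
    exact hind a haI x hxI hax
  have hsep : ∀ e ∈ M', ∀ f ∈ MHI, ∀ v ∈ e, v ∉ f := by
    intro e he f hf v hve hvf
    have hv := (mem_edgeSet_deleteVerts.1 (hM'.1.1 e he)).2 v hve
    obtain ⟨a, haH, b, hbI, rfl⟩ := hMbtw f hf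
    simp only [Set.mem_union, Finset.mem_coe, not_or] at hv
    rcases Sym2.mem_iff.1 hvf with rfl | rfl
    exacts [hv.1 haH, hv.2 hbI]
  have hone : ∀ e ∈ MHI, ∀ a ∈ H, ∀ a' ∈ H, a ∈ e → a' ∈ e → a = a' := by
    intro e he a ha a' ha' hae hae'
    obtain ⟨c, -, b, hbI, rfl⟩ := hMbtw e he
    rcases Sym2.mem_iff.1 hae with rfl | rfl <;> rcases Sym2.mem_iff.1 hae' with rfl | rfl
    all_goals first | rfl | exact absurd hbI (hHI _ ‹_›)
  refine ⟨(hM'.1.mono (deleteVerts_le _ _)).union hMHI hsep, fun N hNm => ?_⟩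
  calc #N = #{e ∈ N | ∃ a ∈ H, a ∈ e} + #{e ∈ N | ¬ ∃ a ∈ H, a ∈ e} :=
        (card_filter_add_card_filter_not _).symm
    _ ≤ #MHI + #M' := add_le_add
        ((hNm.card_filter_meets_le H).trans (card_le_card_of_saturates hMsat hone))
        (hM'.2 _ (hNm.filter_not_meets_of_neighbors_subset
          fun a ha b hab => (hN b).2 ⟨a, ha, hab⟩))
    _ = #(M' ∪ MHI) := by
        rw [card_union_of_disjoint (disjoint_of_forall_mem_not_mem hsep), add_comm]

/-- Given a crown `(H, I)` in `G` with saturating matching `MHI`, and any maximum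
matching `M'` of `G - (H ∪ I)`, the union `M' ∪ MHI` is a maximum matching of `G`. -/
theorem stmt3 {V : Type*} [Fintype V] [DecidableEq V] (G : SimpleGraph V)
    (H I : Finset V)
    (hind : ∀ a ∈ I, ∀ b ∈ I, ¬ G.Adj a b)
    (hN : ∀ b, b ∈ H ↔ ∃ a ∈ I, G.Adj a b)
    (MHI : Finset (Sym2 V)) (hMHI : IsMatching G MHI)
    (hMbtw : ∀ e ∈ MHI, ∃ a ∈ H, ∃ b ∈ I, e = s(a, b))
    (hMsat : ∀ a ∈ H, ∃ e ∈ MHI, a ∈ e)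
    (M' : Finset (Sym2 V)) (hM' : IsMaxMatching (deleteVerts G (↑H ∪ ↑I)) M') :
    IsMaxMatching G (M' ∪ MHI) :=
  stmt3_general G H I hind hN MHI hMHI hMbtw hMsat M' hM'
end

section
/- If a graph G contains a crown (H, I), then the half-integral LP relaxation of vertex cover on G has an optimal solution with some variable not equal to 1/2. Consequently, if the all-1/2 assignment is the unique optimal solution of the vertex cover LP of G, then G contains no crown. -/
/-- A feasible solution of the LP relaxation of vertex cover:
`0 ≤ x_v ≤ 1` for all `v`, and `x_u + x_v ≥ 1` for every edge `uv`. -/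
def LPFeasible {V : Type*} (G : SimpleGraph V) (x : V → ℝ) : Prop :=
  (∀ v, 0 ≤ x v ∧ x v ≤ 1) ∧ ∀ ⦃u v⦄, G.Adj u v → 1 ≤ x u + x v

/-- An optimal solution of the vertex cover LP: feasible and of minimum value. -/
def LPOptimal {V : Type*} [Fintype V] (G : SimpleGraph V) (x : V → ℝ) : Prop :=
  LPFeasible G x ∧ ∀ y : V → ℝ, LPFeasible G y → ∑ v, x v ≤ ∑ v, y v

/-- If `G` contains a (nonempty) crown `(H, I)`, then the vertex cover LP of `G` has
an optimal solution with some variable not equal to 1/2; consequently the all-1/2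
assignment is not the unique optimal solution of the vertex cover LP of `G`. -/
theorem stmt4 {V : Type*} [Fintype V] [DecidableEq V] (G : SimpleGraph V)
    (H I : Finset V) (hIne : I.Nonempty)
    (hind : ∀ a ∈ I, ∀ b ∈ I, ¬ G.Adj a b)
    (hN : ∀ b, b ∈ H ↔ ∃ a ∈ I, G.Adj a b)
    (M : Finset (Sym2 V)) (hM : IsMatching G M)
    (hMbtw : ∀ e ∈ M, ∃ a ∈ H, ∃ b ∈ I, e = s(a, b))
    (hMsat : ∀ a ∈ H, ∃ e ∈ M, a ∈ e) :
    (∃ x : V → ℝ, LPOptimal G x ∧ ∃ v, x v ≠ 1 / 2) ∧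
      ¬ (LPOptimal G (fun _ => (1 / 2 : ℝ)) ∧
          ∀ y : V → ℝ, LPOptimal G y → y = fun _ => (1 / 2 : ℝ)) := by

  classical
  -- H and I are disjoint
  have hHI : ∀ v, v ∈ H → v ∉ I := by
    intro v hvH hvI
    obtain ⟨a, haI, hadj⟩ := (hN v).1 hvH
    exact hind a haI v hvI hadj
  -- the crown candidate solution
  set x0 : V → ℝ := fun v => if v ∈ H then 1 else if v ∈ I then 0 else 1/2 with hx0
  have hx0I : ∀ a ∈ I, x0 a = 0 := by
    intro a ha
    simp only [hx0]
    rw [if_neg (fun h => hHI a h ha), if_pos ha]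
  have hx0feas : LPFeasible G x0 := by
    constructor
    · intro v
      simp only [hx0]
      split_ifs <;> norm_num
    · intro u v hadj
      by_cases huH : u ∈ H
      · have : (0:ℝ) ≤ x0 v := by simp only [hx0]; split_ifs <;> norm_num
        simp only [hx0, if_pos huH]; linarith
      by_cases hvH : v ∈ H
      · have : (0:ℝ) ≤ x0 u := by simp only [hx0]; split_ifs <;> norm_num
        simp only [hx0, if_pos hvH]; linarith
      have huI : u ∉ I := fun h => hvH ((hN v).2 ⟨u, h, hadj⟩)
      have hvI : v ∉ I := fun h => huH ((hN u).2 ⟨v, h, hadj.symm⟩)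
      simp only [hx0, if_neg huH, if_neg hvH, if_neg huI, if_neg hvI]
      norm_num
  -- |H| ≤ |I| via the matching
  have key : ∀ a ∈ H, ∃ b ∈ I, s(a, b) ∈ M := by
    intro a ha
    obtain ⟨e, heM, hae⟩ := hMsat a ha
    obtain ⟨a', ha', b, hb, rfl⟩ := hMbtw e heM
    rw [Sym2.mem_iff] at hae
    rcases hae with rfl | rfl
    · exact ⟨b, hb, heM⟩
    · exact absurd hb (fun h => hHI a ha h)
  choose! f hfI hfM using key
  have hcard : H.card ≤ I.card := by
    apply Finset.card_le_card_of_injOn f hfI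
    intro a1 h1 a2 h2 hfe
    by_contra hne
    have hne' : s(a1, f a1) ≠ s(a2, f a2) := by
      rw [hfe]
      intro h
      rw [Sym2.eq_iff] at h
      rcases h with ⟨h, _⟩ | ⟨h, h'⟩
      · exact hne h
      · exact hHI a1 h1 (h ▸ hfI a2 h2)
    exact hM.2 _ (hfM a1 h1) _ (hfM a2 h2) hne' (f a1)
      (by rw [Sym2.mem_iff]; right; rfl)
      (by rw [hfe, Sym2.mem_iff]; right; rfl)
  -- sum of x0 is at most sum of all-1/2
  have hsum : ∑ v, x0 v ≤ ∑ v : V, (1/2 : ℝ) := by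
    have hpt : ∀ v, x0 v = 1/2 + (if v ∈ H then (1/2:ℝ) else 0)
        - (if v ∈ I then (1/2:ℝ) else 0) := by
      intro v
      simp only [hx0]
      by_cases hvH : v ∈ H
      · rw [if_pos hvH, if_pos hvH, if_neg (hHI v hvH)]; norm_num
      · rw [if_neg hvH, if_neg hvH]
        by_cases hvI : v ∈ I
        · rw [if_pos hvI, if_pos hvI]; norm_num
        · rw [if_neg hvI, if_neg hvI]; norm_num
    have hH : ∑ v : V, (if v ∈ H then (1/2:ℝ) else 0) = H.card * (1/2) := by
      rw [Finset.sum_ite_mem, Finset.univ_inter, Finset.sum_const, nsmul_eq_mul]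
    have hI : ∑ v : V, (if v ∈ I then (1/2:ℝ) else 0) = I.card * (1/2) := by
      rw [Finset.sum_ite_mem, Finset.univ_inter, Finset.sum_const, nsmul_eq_mul]
    calc ∑ v, x0 v
        = ∑ v : V, (1/2 + (if v ∈ H then (1/2:ℝ) else 0)
            - (if v ∈ I then (1/2:ℝ) else 0)) := by
          exact Finset.sum_congr rfl (fun v _ => hpt v)
      _ = (∑ v : V, (1/2:ℝ)) + H.card * (1/2) - I.card * (1/2) := by
          rw [Finset.sum_sub_distrib, Finset.sum_add_distrib, hH, hI]
      _ ≤ ∑ v : V, (1/2:ℝ) := by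
          have : (H.card : ℝ) ≤ I.card := Nat.cast_le.2 hcard
          nlinarith
  -- the all-1/2 solution is feasible
  have hhalf : LPFeasible G (fun _ => (1/2 : ℝ)) := by
    refine ⟨fun v => by norm_num, fun u v _ => by norm_num⟩
  -- existence of an optimal solution via compactness
  set S : Set (V → ℝ) := {x | LPFeasible G x} with hS
  have hSne : S.Nonempty := ⟨fun _ => 1/2, hhalf⟩
  have hSeq : S = (Set.pi Set.univ fun _ : V => Set.Icc (0:ℝ) 1) ∩
      ⋂ p : {p : V × V // G.Adj p.1 p.2}, {x : V → ℝ | 1 ≤ x p.1.1 + x p.1.2} := by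
    ext x
    simp only [hS, Set.mem_setOf_eq, Set.mem_inter_iff, Set.mem_pi, Set.mem_univ,
      Set.mem_Icc, forall_true_left, Set.mem_iInter, Subtype.forall, Prod.forall,
      LPFeasible]
    try tauto
  have hScomp : IsCompact S := by
    rw [hSeq]
    exact (isCompact_univ_pi fun _ => isCompact_Icc).inter_right
      (isClosed_iInter fun p => isClosed_le continuous_const
        ((continuous_apply _).add (continuous_apply _)))
  obtain ⟨y, hyS, hymin⟩ := hScomp.exists_isMinOn hSne
    ((continuous_finset_sum _ fun v _ => continuous_apply v).continuousOn)
  have hyopt : LPOptimal G y := ⟨hyS, fun z hz => hymin hz⟩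
  -- main claim
  have main : ∃ x : V → ℝ, LPOptimal G x ∧ ∃ v, x v ≠ 1 / 2 := by
    by_cases hy : ∃ v, y v ≠ 1/2
    · exact ⟨y, hyopt, hy⟩
    · push_neg at hy
      have hyval : ∑ v, y v = ∑ v : V, (1/2 : ℝ) :=
        Finset.sum_congr rfl (fun v _ => hy v)
      have hx0opt : LPOptimal G x0 := by
        refine ⟨hx0feas, fun z hz => ?_⟩
        calc ∑ v, x0 v ≤ ∑ v : V, (1/2:ℝ) := hsum
          _ = ∑ v, y v := hyval.symm
          _ ≤ ∑ v, z v := hyopt.2 z hz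
      obtain ⟨a, haI⟩ := hIne
      exact ⟨x0, hx0opt, a, by rw [hx0I a haI]; norm_num⟩
  refine ⟨main, fun ⟨_, huniq⟩ => ?_⟩
  obtain ⟨x, hxopt, v, hv⟩ := main
  exact hv (congrFun (huniq x hxopt) v)
end

section
/- Let G be a graph and x an optimal feasible solution to the vertex cover LP with values in {0, 1/2, 1}. Let V_1 = {v : x_v = 1} and V_0 = {v : x_v = 0}. If V_0 ∪ V_1 ≠ ∅, then (V_1, V_0) is a crown in G: V_0 is independent, N(V_0) = V_1, and there exists a matching between V_1 and V_0 saturating V_1. -/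
/-!
The constraints force the neighbours of `V₀` to lie in `V₁`. On the other hand, raising to `1/2`
all values on a set `S` none of whose outside neighbours has value `0` keeps the solution
feasible, so by optimality `∑_{v ∈ S} x v ≤ |S| / 2`. For `W ⊆ V₁` and `S = W ∪ (N(W) ∩ V₀)`
this is Hall's condition `|W| ≤ |N(W) ∩ V₀|`; Hall's theorem then matches `V₁` into `V₀`,
which in particular shows `V₁ ⊆ N(V₀)`.
-/

section

open Finset

variable {V : Type*} {G : SimpleGraph V} {x : V → ℝ}

namespace LPFeasible

theorem not_adj_of_eq_zero (hx : LPFeasible G x) {a b : V} (ha : x a = 0) (hb : x b = 0) :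
    ¬ G.Adj a b := fun hab => by
  linarith [hx.2 hab]

theorem eq_one_of_adj_of_eq_zero (hx : LPFeasible G x) {a b : V} (ha : x a = 0)
    (hab : G.Adj a b) : x b = 1 := by
  linarith [hx.2 hab, (hx.1 b).2]

theorem piecewise_half [DecidableEq V] (hx : LPFeasible G x) (S : Finset V)
    (hS : ∀ u ∈ S, ∀ w ∉ S, G.Adj u w → 1 / 2 ≤ x w) :
    LPFeasible G (S.piecewise (fun _ => 1 / 2) x) := by
  refine ⟨fun v => ?_, fun u w huw => ?_⟩
  · by_cases hv : v ∈ S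
    · rw [piecewise_eq_of_mem _ _ _ hv]; norm_num
    · rw [piecewise_eq_of_notMem _ _ _ hv]; exact hx.1 v
  · by_cases hu : u ∈ S <;> by_cases hw : w ∈ S <;>
      simp only [piecewise_eq_of_mem, piecewise_eq_of_notMem, hu, hw, not_false_eq_true]
    · norm_num
    · linarith [hS u hu w hw huw]
    · linarith [hS w hw u hu huw.symm]
    · exact hx.2 huw

end LPFeasible

theorem LPOptimal.sum_le_card_div_two [Fintype V] (hx : LPOptimal G x) (S : Finset V)
    (hS : ∀ u ∈ S, ∀ w ∉ S, G.Adj u w → 1 / 2 ≤ x w) :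
    ∑ v ∈ S, x v ≤ #S / 2 := by
  classical
  have hle := hx.2 _ (hx.1.piecewise_half S hS)
  rw [sum_piecewise, ← sum_inter_add_sum_sdiff univ S x, univ_inter] at hle
  simp only [sum_const, nsmul_eq_mul] at hle
  linarith

open Classical in
theorem LPOptimal.card_le_card_zero_neighbors [Fintype V] (hx : LPOptimal G x)
    (hhalf : ∀ v, x v = 0 ∨ x v = 1 / 2 ∨ x v = 1) (A : Finset {v // x v = 1}) :
    #A ≤ #{b | ∃ a ∈ A, x b = 0 ∧ G.Adj a b} := by
  set W := A.map (Function.Embedding.subtype _)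
  set B : Finset V := {b | ∃ a ∈ A, x b = 0 ∧ G.Adj a b}
  have hW : ∀ u ∈ W, x u = 1 := by
    intro u hu
    obtain ⟨a, -, rfl⟩ := mem_map.1 hu
    exact a.2
  have hB : ∀ u ∈ B, x u = 0 := by
    intro u hu
    obtain ⟨-, -, hu, -⟩ := (mem_filter.1 hu).2
    exact hu
  have hdisj : Disjoint W B :=
    disjoint_left.2 fun u huW huB => by linarith [hW u huW, hB u huB]
  have hS : ∀ u ∈ W ∪ B, ∀ w ∉ W ∪ B, G.Adj u w → 1 / 2 ≤ x w := by
    intro u hu w hw huw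
    rcases hhalf w with hw0 | hw0 | hw0
    · exfalso
      rcases mem_union.1 hu with huW | huB
      · obtain ⟨a, haA, rfl⟩ := mem_map.1 huW
        exact hw (mem_union_right _ (mem_filter.2 ⟨mem_univ _, a, haA, hw0, huw⟩))
      · exact hx.1.not_adj_of_eq_zero (hB u huB) hw0 huw
    all_goals norm_num [hw0]
  have hsum := hx.sum_le_card_div_two (W ∪ B) hS
  rw [sum_union hdisj, sum_congr rfl hW, sum_congr rfl hB, card_union_of_disjoint hdisj] at hsum
  simp only [W, sum_const, card_map, nsmul_eq_mul, mul_one, mul_zero, add_zero,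
    Nat.cast_add] at hsum
  exact_mod_cast (by linarith : (#A : ℝ) ≤ #B)

theorem isMatching_image_of_injective [DecidableEq V] {ι : Type*} [Fintype ι] (g f : ι → V)
    (hg : Function.Injective g) (hf : Function.Injective f) (hgf : ∀ i j, g i ≠ f j)
    (hadj : ∀ i, G.Adj (g i) (f i)) :
    IsMatching G (univ.image fun i => s(g i, f i)) := by
  refine ⟨?_, ?_⟩
  · simp only [mem_image, mem_univ, true_and, forall_exists_index, forall_apply_eq_imp_iff]
    exact hadj
  · simp only [mem_image, mem_univ, true_and, forall_exists_index, forall_apply_eq_imp_iff]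
    intro i j hij v hvi hvj
    have hij : i ≠ j := fun h => hij (h ▸ rfl)
    rcases Sym2.mem_iff.1 hvi with rfl | rfl <;> rcases Sym2.mem_iff.1 hvj with h | h
    · exact hij (hg h)
    · exact hgf i j h
    · exact hgf j i h.symm
    · exact hij (hf h)

end

theorem stmt5_general {V : Type*} [Fintype V] (G : SimpleGraph V)
    (x : V → ℝ) (hopt : LPOptimal G x)
    (hvals : ∀ v, x v = 0 ∨ x v = 1 / 2 ∨ x v = 1) :
    (∀ a, x a = 0 → ∀ b, x b = 0 → ¬ G.Adj a b) ∧
    ({b | ∃ a, x a = 0 ∧ G.Adj a b} = {v | x v = 1}) ∧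
    ∃ M : Finset (Sym2 V), IsMatching G M ∧
      (∀ e ∈ M, ∃ a, x a = 1 ∧ ∃ b, x b = 0 ∧ e = s(a, b)) ∧
      ∀ a, x a = 1 → ∃ e ∈ M, a ∈ e := by
  classical
  obtain ⟨f, hf_inj, hf⟩ :=
    (Fintype.all_card_le_filter_rel_iff_exists_injective fun (a : {v // x v = 1}) b =>
      x b = 0 ∧ G.Adj a b).1 (hopt.card_le_card_zero_neighbors hvals)
  have hgf : ∀ a b : {v // x v = 1}, a.1 ≠ f b := fun a b h => by
    linarith [a.2, h ▸ (hf b).1]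
  refine ⟨fun a ha b hb => hopt.1.not_adj_of_eq_zero ha hb, ?_,
    Finset.univ.image fun a => s(a.1, f a),
    isMatching_image_of_injective Subtype.val f Subtype.val_injective hf_inj hgf
      fun a => (hf a).2, ?_, ?_⟩
  · ext b
    refine ⟨fun ⟨a, ha, hab⟩ => hopt.1.eq_one_of_adj_of_eq_zero ha hab, fun hb => ?_⟩
    exact ⟨f ⟨b, hb⟩, (hf _).1, (hf _).2.symm⟩
  · simp only [Finset.mem_image, Finset.mem_univ, true_and, forall_exists_index,
      forall_apply_eq_imp_iff]
    exact fun a => ⟨a.1, a.2, f a, (hf a).1, rfl⟩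
  · exact fun a ha => ⟨s(a, f ⟨a, ha⟩),
      Finset.mem_image_of_mem (fun a : {v // x v = 1} => s(a.1, f a)) (Finset.mem_univ ⟨a, ha⟩),
      Sym2.mem_mk_left _ _⟩

/-- Let `x` be an optimal half-integral solution of the vertex cover LP,
`V₁ = {v | x v = 1}` and `V₀ = {v | x v = 0}`. If `V₀ ∪ V₁ ≠ ∅`, then `(V₁, V₀)` is
a crown: `V₀` is independent, `N(V₀) = V₁`, and there is a matching between `V₁`
and `V₀` saturating `V₁`. -/
theorem stmt5 {V : Type*} [Fintype V] [DecidableEq V] (G : SimpleGraph V)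
    (x : V → ℝ) (hopt : LPOptimal G x)
    (hvals : ∀ v, x v = 0 ∨ x v = 1 / 2 ∨ x v = 1)
    (hne : ∃ v, x v = 0 ∨ x v = 1) :
    (∀ a, x a = 0 → ∀ b, x b = 0 → ¬ G.Adj a b) ∧
    ({b | ∃ a, x a = 0 ∧ G.Adj a b} = {v | x v = 1}) ∧
    ∃ M : Finset (Sym2 V), IsMatching G M ∧
      (∀ e ∈ M, ∃ a, x a = 1 ∧ ∃ b, x b = 0 ∧ e = s(a, b)) ∧
      ∀ a, x a = 1 → ∃ e ∈ M, a ∈ e :=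
  stmt5_general G x hopt hvals
end

section
/- Let G be a connected graph with minimum degree at least 2 and a feedback edge set of size at most k ≥ 1. Then G has at most 2k - 1 vertices of degree at least 3. -/
/-!
A degree count. The forest `G - F` has at most `n - 1` edges, so `G` has at most `n - 1 + k`,
and the degree sum is at most `2n - 2 + 2k`. Every vertex contributes at least `2` to it and
every vertex of degree `≥ 3` at least one more, so there are at most `2k - 2` such vertices.
-/

open Finset SimpleGraph

namespace SimpleGraph

variable {V : Type*} {G : SimpleGraph V}

-- Truncated subtraction: for empty `V` the right-hand side is `0`.
lemma IsAcyclic.card_edgeFinset_le [Fintype V] [Fintype G.edgeSet] (hG : G.IsAcyclic) :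
    #G.edgeFinset ≤ Fintype.card V - 1 := by
  classical
  cases isEmpty_or_nonempty V
  · have : G = ⊥ := by ext a; exact isEmptyElim a
    simp [this]
  -- extend the forest to a spanning tree of the complete graph
  obtain ⟨T, hGT, -, hT⟩ := connected_top.exists_isTree_le_of_le_of_isAcyclic le_top hG
  have hcard := hT.card_edgeFinset
  have hmono : #G.edgeFinset ≤ #T.edgeFinset := card_le_card (edgeFinset_mono hGT)
  omega

lemma card_edgeFinset_le_card_edgeFinset_deleteEdges_add [Fintype V] [DecidableEq V]
    [DecidableRel G.Adj] (F : Finset (Sym2 V)) :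
    #G.edgeFinset ≤ #(G.deleteEdges ↑F).edgeFinset + #F := by
  rw [edgeFinset_deleteEdges]
  exact card_le_card_sdiff_add_card

end SimpleGraph

lemma two_mul_card_add_card_filter_three_le_sum {ι : Type*} (s : Finset ι) (f : ι → ℕ)
    (hf : ∀ i ∈ s, 2 ≤ f i) : 2 * #s + #{i ∈ s | 3 ≤ f i} ≤ ∑ i ∈ s, f i := by
  calc 2 * #s + #{i ∈ s | 3 ≤ f i} = ∑ i ∈ s, (2 + if 3 ≤ f i then 1 else 0) := by
        rw [sum_add_distrib, sum_const, smul_eq_mul, mul_comm, sum_boole, Nat.cast_id]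
    _ ≤ ∑ i ∈ s, f i := sum_le_sum fun i hi => by have := hf i hi; split_ifs <;> omega

theorem stmt6_general {V : Type*} [Fintype V] [DecidableEq V] (G : SimpleGraph V)
    [DecidableRel G.Adj] (k : ℕ)
    (hmin : ∀ v, 2 ≤ G.degree v)
    (F : Finset (Sym2 V)) (hFcard : F.card ≤ k)
    (hacyc : (G.deleteEdges ↑F).IsAcyclic) :
    (Finset.univ.filter fun v => 3 ≤ G.degree v).card ≤ 2 * k - 1 := by
  have hforest := hacyc.card_edgeFinset_le
  have hedges := G.card_edgeFinset_le_card_edgeFinset_deleteEdges_add F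
  have hdeg := two_mul_card_add_card_filter_three_le_sum univ (fun v => G.degree v)
    fun v _ => hmin v
  rw [sum_degrees_eq_twice_card_edges, card_univ] at hdeg
  have hS := card_le_univ (Finset.univ.filter fun v => 3 ≤ G.degree v)
  omega

/-- Let `G` be a connected graph with minimum degree at least 2 that has a feedback
edge set of size at most `k ≥ 1` (a set `F` of edges such that `G - F` is acyclic).
Then `G` has at most `2k - 1` vertices of degree at least 3. -/
theorem stmt6 {V : Type*} [Fintype V] [DecidableEq V] (G : SimpleGraph V)
    [DecidableRel G.Adj] (k : ℕ) (hk : 1 ≤ k)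
    (hconn : G.Connected) (hmin : ∀ v, 2 ≤ G.degree v)
    (F : Finset (Sym2 V)) (hFsub : ↑F ⊆ G.edgeSet) (hFcard : F.card ≤ k)
    (hacyc : (G.deleteEdges ↑F).IsAcyclic) :
    (Finset.univ.filter fun v => 3 ≤ G.degree v).card ≤ 2 * k - 1 :=
  stmt6_general G k hmin F hFcard hacyc
end

section
/- Let G be a graph with no vertex of degree 0 or 1 and no vertex of degree 2, and suppose G has a feedback edge set of size k ≥ 1. Then G has at most 2k - 1 vertices and at most 3k - 2 edges. -/
open Finset SimpleGraph

/-- A finite acyclic graph has at most `|V| - 1` edges. -/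
lemma acyclic_card_edgeFinset_le' {V : Type*} [Fintype V] [DecidableEq V]
    (H : SimpleGraph V) [DecidableRel H.Adj] (hH : H.IsAcyclic) :
    H.edgeFinset.card ≤ Fintype.card V - 1 := by
  classical
  cases isEmpty_or_nonempty V with
  | inl hV =>
    have : H.edgeFinset = ∅ := by
      ext e
      refine Sym2.ind (fun a b => ?_) e
      exact hV.elim a
    simp [this]
  | inr hV =>
    obtain ⟨v₀⟩ := hV
    set r : V → V := fun v => (H.connectedComponentMk v).out with hrdef
    have hrcongr : ∀ {a b : V}, H.Reachable a b → r a = r b := by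
      intro a b h
      exact congrArg Quot.out (ConnectedComponent.sound h)
    have hreach : ∀ v, H.Reachable v (r v) := by
      intro v
      exact (ConnectedComponent.exact (Quot.out_eq (H.connectedComponentMk v))).symm
    have hrr : ∀ v, r (r v) = r v := fun v => (hrcongr (hreach v)).symm
    let p : ∀ v, H.Path v (r v) := fun v => (hreach v).some.toPath
    let φ : V → Sym2 V := fun v => s(v, (p v).1.getVert 1)
    set S : Finset V := Finset.univ.filter (fun v => v ≠ r v) with hSdef
    have hScard : S.card ≤ Fintype.card V - 1 := by
      have hsub : S ⊆ Finset.univ.erase (r v₀) := by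
        intro x hx
        rw [hSdef, mem_filter] at hx
        refine Finset.mem_erase.mpr ⟨?_, Finset.mem_univ _⟩
        intro hxe
        exact hx.2 (by rw [hxe, hrr])
      calc S.card ≤ (Finset.univ.erase (r v₀)).card := Finset.card_le_card hsub
        _ = Fintype.card V - 1 := by
          rw [Finset.card_erase_of_mem (Finset.mem_univ _), Finset.card_univ]
    have hkey : H.edgeFinset ⊆ S.image φ := by
      intro e he
      induction e using Sym2.ind with
      | _ a b =>
        rw [mem_edgeFinset, mem_edgeSet] at he
        have hrba : r b = r a := hrcongr he.symm.reachable
        by_cases hb : b ∈ (p a).1.support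
        · -- the path from a to its root starts with the edge a-b
          have h1 : (p a).1.takeUntil b hb = Walk.cons he Walk.nil := by
            have hp1 : ((p a).1.takeUntil b hb).IsPath := (p a).2.takeUntil hb
            have hp2 : (Walk.cons he Walk.nil).IsPath := by
              simp [Walk.cons_isPath_iff, he.ne]
            exact congrArg Subtype.val (hH.path_unique ⟨_, hp1⟩ ⟨_, hp2⟩)
          have h2 : (p a).1 = Walk.cons he ((p a).1.dropUntil b hb) := by
            conv_lhs => rw [← Walk.take_spec (p a).1 hb]
            rw [h1]
            rfl
          have haS : a ≠ r a := by
            intro hra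
            have hnodup := (p a).2.support_nodup
            rw [h2, Walk.support_cons] at hnodup
            have h4 : a ∉ ((p a).1.dropUntil b hb).support := (List.nodup_cons.mp hnodup).1
            set L := ((p a).1.dropUntil b hb).support with hL
            have h3 : r a ∈ L := Walk.end_mem_support _
            rw [hra] at h4
            exact h4 h3
          refine Finset.mem_image.mpr ⟨a, ?_, ?_⟩
          · rw [hSdef, mem_filter]; exact ⟨mem_univ _, haS⟩
          · show s(a, (p a).1.getVert 1) = s(a, b)
            rw [h2, Walk.getVert_cons_succ, Walk.getVert_zero]
        · -- the path from b to its root starts with the edge b-a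
          have hq : (Walk.cons he.symm (p a).1).IsPath := (p a).2.cons hb
          have h1 : (p b).1 = (Walk.cons he.symm (p a).1).copy rfl hrba.symm := by
            have hp2 : ((Walk.cons he.symm (p a).1).copy rfl hrba.symm).IsPath :=
              (Walk.isPath_copy _ rfl hrba.symm).mpr hq
            exact congrArg Subtype.val (hH.path_unique (p b) ⟨_, hp2⟩)
          have hbS : b ≠ r b := by
            intro hrb
            apply hb
            have h5 : b = r a := hrb.trans hrba
            rw [h5]
            exact Walk.end_mem_support _
          refine Finset.mem_image.mpr ⟨b, ?_, ?_⟩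
          · rw [hSdef, mem_filter]; exact ⟨mem_univ _, hbS⟩
          · show s(b, (p b).1.getVert 1) = s(a, b)
            rw [h1, Walk.getVert_copy, Walk.getVert_cons_succ, Walk.getVert_zero]
            exact Sym2.eq_swap
    calc H.edgeFinset.card ≤ (S.image φ).card := Finset.card_le_card hkey
      _ ≤ S.card := Finset.card_image_le
      _ ≤ Fintype.card V - 1 := hScard

/-- Let `G` be a graph with no vertex of degree 0, 1, or 2 (i.e. minimum degree at
least 3), and suppose `G` has a feedback edge set of size `k ≥ 1` (a set `F` of `k`
edges such that `G - F` is acyclic). Then `G` has at most `2k - 1` vertices and at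
most `3k - 2` edges. -/
theorem stmt7 {V : Type*} [Fintype V] [DecidableEq V] (G : SimpleGraph V)
    [DecidableRel G.Adj] (hmin : ∀ v, 3 ≤ G.degree v)
    (k : ℕ) (hk : 1 ≤ k) (F : Finset (Sym2 V)) (hFsub : ↑F ⊆ G.edgeSet)
    (hFcard : F.card = k) (hacyc : (G.deleteEdges ↑F).IsAcyclic) :
    Fintype.card V ≤ 2 * k - 1 ∧ G.edgeFinset.card ≤ 3 * k - 2 := by
  classical
  set H := G.deleteEdges ↑F with hHdef
  have hm' : H.edgeFinset.card ≤ Fintype.card V - 1 :=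
    acyclic_card_edgeFinset_le' H hacyc
  have hsub : G.edgeFinset ⊆ H.edgeFinset ∪ F := by
    intro e he
    rw [mem_edgeFinset] at he
    by_cases hF : e ∈ F
    · exact Finset.mem_union_right _ hF
    · refine Finset.mem_union_left _ ?_
      rw [mem_edgeFinset, hHdef, edgeSet_deleteEdges]
      exact ⟨he, hF⟩
  have hm : G.edgeFinset.card ≤ H.edgeFinset.card + k := by
    calc G.edgeFinset.card ≤ (H.edgeFinset ∪ F).card := Finset.card_le_card hsub
      _ ≤ H.edgeFinset.card + F.card := Finset.card_union_le _ _
      _ = H.edgeFinset.card + k := by rw [hFcard]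
  have hdeg : 3 * Fintype.card V ≤ 2 * G.edgeFinset.card := by
    have := G.sum_degrees_eq_twice_card_edges
    calc 3 * Fintype.card V = ∑ _v : V, 3 := by
          rw [Finset.sum_const, Finset.card_univ, smul_eq_mul, mul_comm]
      _ ≤ ∑ v, G.degree v := Finset.sum_le_sum (fun v _ => hmin v)
      _ = 2 * G.edgeFinset.card := this
  omega
end

section
/- Let G be a graph and (H, I) a crown in G. Then |I| ≥ |H|, and the minimum vertex cover size of the induced subgraph G[H ∪ I] equals |H|; moreover H itself is a minimum vertex cover of G[H ∪ I]. -/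
/-- A vertex cover of `G`: a set of vertices meeting every edge. -/
def IsVertexCover {V : Type*} (G : SimpleGraph V) (S : Finset V) : Prop :=
  ∀ ⦃a b⦄, G.Adj a b → a ∈ S ∨ b ∈ S

/-- The subgraph of `G` induced on the vertex set `T` (other vertices become
isolated). -/
def inducedOn {V : Type*} (G : SimpleGraph V) (T : Set V) : SimpleGraph V where
  Adj a b := G.Adj a b ∧ a ∈ T ∧ b ∈ T
  symm := ⟨fun _ _ ⟨h, ha, hb⟩ => ⟨h.symm, hb, ha⟩⟩
  loopless := ⟨fun a ⟨h, _, _⟩ => G.loopless.irrefl a h⟩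

/-!
The matching edges each join a vertex of `H` to a vertex of `I`, and `H`, `I` are disjoint,
so no matching edge has two endpoints in `H`; as `M` saturates `H`, `|H| ≤ |M|`. The edges of
a matching are disjoint, so they need `|M|` distinct vertices of `I` and of any vertex cover,
which gives both `|H| ≤ |I|` and the lower bound on vertex covers. `H` covers `G[H ∪ I]`
because `I` is independent.
-/

theorem IsVertexCover.exists_mem_of_mem_edgeSet {V : Type*} {G : SimpleGraph V} {S : Finset V}
    (hS : IsVertexCover G S) {e : Sym2 V} (he : e ∈ G.edgeSet) : ∃ v ∈ S, v ∈ e := by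
  induction e using Sym2.ind with
  | h a b =>
    rcases hS he with ha | hb
    · exact ⟨a, ha, Sym2.mem_mk_left a b⟩
    · exact ⟨b, hb, Sym2.mem_mk_right a b⟩

namespace IsMatching

variable {V : Type*} {G : SimpleGraph V} {M : Finset (Sym2 V)}

theorem subsingleton_edges_containing (hM : IsMatching G M) (v : V) :
    ({e ∈ M | v ∈ e} : Set (Sym2 V)).Subsingleton := by
  rintro e ⟨he, hve⟩ f ⟨hf, hvf⟩
  by_contra hne
  exact hM.2 e he f hf hne v hve hvf

theorem card_le_card_of_forall_exists_mem (hM : IsMatching G M) {T : Finset V}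
    (hT : ∀ e ∈ M, ∃ v ∈ T, v ∈ e) : M.card ≤ T.card :=
  Finset.card_le_card_of_forall_subsingleton (fun e v => v ∈ e) hT
    fun v _ => (hM.subsingleton_edges_containing v).anti fun _ h => h

theorem card_le_card_of_isVertexCover (hM : IsMatching G M) {G' : SimpleGraph V}
    (hMG' : ∀ e ∈ M, e ∈ G'.edgeSet) {S : Finset V} (hS : IsVertexCover G' S) :
    M.card ≤ S.card :=
  hM.card_le_card_of_forall_exists_mem fun e he => hS.exists_mem_of_mem_edgeSet (hMG' e he)

end IsMatching

theorem card_le_card_of_saturated_by_edges_between {V : Type*} {H I : Finset V}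
    (hHI : Disjoint H I) {M : Finset (Sym2 V)}
    (hMbtw : ∀ e ∈ M, ∃ a ∈ H, ∃ b ∈ I, e = s(a, b))
    (hMsat : ∀ a ∈ H, ∃ e ∈ M, a ∈ e) : H.card ≤ M.card := by
  refine Finset.card_le_card_of_forall_subsingleton (fun a e => a ∈ e) hMsat ?_
  rintro e he a₁ ⟨ha₁, h₁⟩ a₂ ⟨ha₂, h₂⟩
  obtain ⟨a, -, b, hb, rfl⟩ := hMbtw e he
  have hb_notMem : ∀ x ∈ H, x ≠ b := fun x hx hxb =>
    Finset.disjoint_left.mp hHI hx (hxb ▸ hb)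
  rw [Sym2.mem_iff] at h₁ h₂
  rcases h₁ with rfl | rfl
  · exact (h₂.resolve_right (hb_notMem a₂ ha₂)).symm
  · exact absurd rfl (hb_notMem a₁ ha₁)

theorem stmt19_general {V : Type*} (G : SimpleGraph V)
    (H I : Finset V)
    (hind : ∀ a ∈ I, ∀ b ∈ I, ¬ G.Adj a b)
    (hN : ∀ b, b ∈ H ↔ ∃ a ∈ I, G.Adj a b)
    (M : Finset (Sym2 V)) (hM : IsMatching G M)
    (hMbtw : ∀ e ∈ M, ∃ a ∈ H, ∃ b ∈ I, e = s(a, b))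
    (hMsat : ∀ a ∈ H, ∃ e ∈ M, a ∈ e) :
    H.card ≤ I.card ∧
    IsVertexCover (inducedOn G (↑H ∪ ↑I)) H ∧
    ∀ S : Finset V, IsVertexCover (inducedOn G (↑H ∪ ↑I)) S → H.card ≤ S.card := by
  have hHI : Disjoint H I := Finset.disjoint_left.mpr fun b hbH hbI => by
    obtain ⟨a, haI, hab⟩ := (hN b).mp hbH
    exact hind a haI b hbI hab
  have hHM : H.card ≤ M.card := card_le_card_of_saturated_by_edges_between hHI hMbtw hMsat
  have hM_induced : ∀ e ∈ M, e ∈ (inducedOn G (↑H ∪ ↑I)).edgeSet := by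
    intro e he
    obtain ⟨a, ha, b, hb, rfl⟩ := hMbtw e he
    exact ⟨hM.1 _ he, Or.inl ha, Or.inr hb⟩
  refine ⟨?_, ?_, fun S hS => hHM.trans (hM.card_le_card_of_isVertexCover hM_induced hS)⟩
  · refine hHM.trans (hM.card_le_card_of_forall_exists_mem fun e he => ?_)
    obtain ⟨a, -, b, hb, rfl⟩ := hMbtw e he
    exact ⟨b, hb, Sym2.mem_mk_right a b⟩
  · rintro a b ⟨hab, ha | ha, hb | hb⟩
    · exact Or.inl ha
    · exact Or.inl ha
    · exact Or.inr hb
    · exact absurd hab (hind a ha b hb)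

/-- For a crown `(H, I)` in `G`: `|I| ≥ |H|`, `H` is a vertex cover of the induced
subgraph `G[H ∪ I]`, and every vertex cover of `G[H ∪ I]` has size at least `|H|`
(so `H` is a minimum vertex cover of `G[H ∪ I]`, of size `|H|`). -/
theorem stmt19 {V : Type*} [Fintype V] [DecidableEq V] (G : SimpleGraph V)
    (H I : Finset V)
    (hind : ∀ a ∈ I, ∀ b ∈ I, ¬ G.Adj a b)
    (hN : ∀ b, b ∈ H ↔ ∃ a ∈ I, G.Adj a b)
    (M : Finset (Sym2 V)) (hM : IsMatching G M)
    (hMbtw : ∀ e ∈ M, ∃ a ∈ H, ∃ b ∈ I, e = s(a, b))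
    (hMsat : ∀ a ∈ H, ∃ e ∈ M, a ∈ e) :
    H.card ≤ I.card ∧
    IsVertexCover (inducedOn G (↑H ∪ ↑I)) H ∧
    ∀ S : Finset V, IsVertexCover (inducedOn G (↑H ∪ ↑I)) S → H.card ≤ S.card :=
  stmt19_general G H I hind hN M hM hMbtw hMsat
end
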